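/- Let m > 0. For each i ∈ [n] let f_i: ℝ → ℝ be twice continuously differentiable, strictly convex, and attain a finite global minimum, and for each ordered pair i ≠ j let g_ij: ℝ² → ℝ be twice continuously differentiable, convex, bounded below, and symmetric (g_ij(a,b) = g_ji(b,a) for all a,b). Assume all second-order derivatives of every f_i and all second-order partial derivatives of every g_ij are bounded in absolute value by m. Then the sequence generated by x_i^{k+1} = x_i^k − [f_i'(x_i^k) + ∑_{j ∈ N_i(x^k)} ∂g_ij/∂x_i (x_i^k, x_j^k)] / (2m(|N_i(x^k)|+1)), i ∈ [n], converges to a point x* ∈ ℝⁿ. -/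

import Mathlib

/-!
The iteration is a block gradient step, with step size `1 / (2m(|Nᵢ| + 1))`, on the potential
`V x = ∑ᵢ fᵢ xᵢ + ½ ∑ᵢ ∑_{j ≠ i} min (gᵢⱼ xᵢ xⱼ) 0`. The second-order bounds give the sufficient
decrease `V x⁺ + m ‖x⁺ - x‖² ≤ V x`, so the steps tend to zero, and coercivity of the `fᵢ` keeps
the iterates bounded. Every cluster point is a zero of the gradient attached to some frozen
symmetric neighbourhood system; for a fixed system this gradient is a strictly monotone operator
(strict convexity of `fᵢ`, convexity of `gᵢⱼ`), so it has at most one zero. A bounded sequence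
with vanishing steps and finitely many cluster points converges.
-/

open Filter Finset Bornology Set Topology Function

theorem le_add_deriv_mul_add_mul_sq {h : ℝ → ℝ} {L : ℝ} (hd : Differentiable ℝ h)
    (hd' : Differentiable ℝ (deriv h)) (hL : ∀ t, |deriv (deriv h) t| ≤ L) (a b : ℝ) :
    h b ≤ h a + deriv h a * (b - a) + L * (b - a) ^ 2 := by
  have hL₀ : 0 ≤ L := (abs_nonneg _).trans (hL a)
  have hlip : ∀ t, |deriv h t - deriv h a| ≤ L * |t - a| := fun t => by
    simpa [Real.norm_eq_abs] using Convex.norm_image_sub_le_of_norm_deriv_le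
      (fun u _ => hd' u) (fun u _ => by simpa using hL u) convex_univ (mem_univ a) (mem_univ t)
  have hderiv : ∀ t, HasDerivAt (fun t => h t - deriv h a * t) (deriv h t - deriv h a) t :=
    fun t => by
      have := (hd t).hasDerivAt.sub ((hasDerivAt_id' t).const_mul (deriv h a))
      rwa [mul_one] at this
  have hbound : ∀ t ∈ uIcc a b, ‖deriv (fun t => h t - deriv h a * t) t‖ ≤ L * |b - a| :=
    fun t ht => by
      rw [(hderiv t).deriv, Real.norm_eq_abs]
      exact (hlip t).trans (mul_le_mul_of_nonneg_left (abs_sub_left_of_mem_uIcc ht) hL₀)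
  have key := Convex.norm_image_sub_le_of_norm_deriv_le
    (fun t _ => (hderiv t).differentiableAt) hbound (convex_uIcc a b) left_mem_uIcc right_mem_uIcc
  rw [Real.norm_eq_abs, Real.norm_eq_abs, mul_assoc, ← abs_mul, ← sq, abs_sq] at key
  linarith [(abs_le.mp key).2]

theorem ConvexOn.mul_sub_le_sub_of_one_le {E : Type*} [AddCommGroup E] [Module ℝ E] {f : E → ℝ}
    (hf : ConvexOn ℝ univ f) (z d : E) {t : ℝ} (ht : 1 ≤ t) :
    t * (f (z + d) - f z) ≤ f (z + t • d) - f z := by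
  have ht₀ : 0 < t := zero_lt_one.trans_le ht
  have hcomb : (1 - t⁻¹) • z + t⁻¹ • (z + t • d) = z + d := by
    rw [smul_add, smul_smul, inv_mul_cancel₀ ht₀.ne', one_smul, sub_smul, one_smul]; abel
  have hconv := hf.2 (mem_univ z) (mem_univ (z + t • d))
    (sub_nonneg.2 (inv_le_one_of_one_le₀ ht)) (inv_nonneg.2 ht₀.le) (sub_add_cancel 1 t⁻¹)
  rw [hcomb, smul_eq_mul, smul_eq_mul] at hconv
  calc t * (f (z + d) - f z) ≤ t * ((1 - t⁻¹) * f z + t⁻¹ * f (z + t • d) - f z) := by gcongr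
    _ = f (z + t • d) - f z := by field_simp; ring

theorem StrictConvexOn.deriv_sub_mul_sub_pos {f : ℝ → ℝ} (hf : StrictConvexOn ℝ univ f)
    (hd : Differentiable ℝ f) {a b : ℝ} (hab : a ≠ b) :
    0 < (deriv f a - deriv f b) * (a - b) := by
  rcases hab.lt_or_gt with h | h
  · have := hf.strictMonoOn_deriv (fun x _ => hd x) (mem_univ a) (mem_univ b) h
    nlinarith
  · have := hf.strictMonoOn_deriv (fun x _ => hd x) (mem_univ b) (mem_univ a) h
    nlinarith

theorem StrictConvexOn.deriv_sub_mul_sub_nonneg {f : ℝ → ℝ} (hf : StrictConvexOn ℝ univ f)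
    (hd : Differentiable ℝ f) (a b : ℝ) : 0 ≤ (deriv f a - deriv f b) * (a - b) := by
  rcases eq_or_ne a b with rfl | hab
  · simp
  · exact (hf.deriv_sub_mul_sub_pos hd hab).le

theorem StrictConvexOn.isBounded_sublevel {f : ℝ → ℝ} (hf : StrictConvexOn ℝ univ f) {z : ℝ}
    (hz : ∀ y, f z ≤ f y) (K : ℝ) : IsBounded {w | f w ≤ K} := by
  have hmin : IsMinOn f univ z := fun y _ => hz y
  have hgap : ∀ d : ℝ, d ≠ 0 → f z < f (z + d) := fun d hd =>
    (hz _).lt_of_ne fun h => hd (by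
      linarith [hf.eq_of_isMinOn hmin (fun y _ => h ▸ hz y) (mem_univ _) (mem_univ (z + d))])
  set δ := min (f (z + 1) - f z) (f (z + -1) - f z)
  have hδ : 0 < δ :=
    lt_min (sub_pos.2 (hgap 1 one_ne_zero)) (sub_pos.2 (hgap (-1) (by norm_num)))
  have hfar : ∀ d : ℝ, |d| = 1 → ∀ t, 1 ≤ t → t * δ ≤ f (z + t • d) - f z := by
    intro d hd t ht
    have hδd : δ ≤ f (z + d) - f z := by
      rcases abs_eq_abs.mp (hd.trans abs_one.symm) with rfl | rfl
      exacts [min_le_left _ _, min_le_right _ _]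
    exact (mul_le_mul_of_nonneg_left hδd (by linarith)).trans
      (hf.convexOn.mul_sub_le_sub_of_one_le z d ht)
  refine (Metric.isBounded_closedBall (x := z) (r := max 1 ((K - f z) / δ))).subset
    fun w hw => ?_
  rw [Metric.mem_closedBall, Real.dist_eq]
  rcases le_or_gt |w - z| 1 with h | h
  · exact h.trans (le_max_left _ _)
  · refine le_max_of_le_right ((le_div_iff₀ hδ).2 ?_)
    obtain ⟨d, hd, hw'⟩ : ∃ d : ℝ, |d| = 1 ∧ z + |w - z| • d = w := by
      rcases le_or_gt 0 (w - z) with hs | hs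
      · exact ⟨1, abs_one, by rw [abs_of_nonneg hs]; simp⟩
      · exact ⟨-1, by simp, by rw [abs_of_neg hs]; simp⟩
    have := hfar d hd _ h.le
    rw [hw'] at this
    linarith [show f w ≤ K from hw]

section PartialDeriv

variable {G : ℝ → ℝ → ℝ}

theorem hasDerivAt_fst_of_differentiableAt {a b : ℝ}
    (hG : DifferentiableAt ℝ (uncurry G) (a, b)) :
    HasDerivAt (fun t => G t b) (fderiv ℝ (uncurry G) (a, b) (1, 0)) a :=
  hG.hasFDerivAt.comp_hasDerivAt (f := fun t => (t, b)) a
    ((hasDerivAt_id a).prodMk (hasDerivAt_const a b))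

theorem hasDerivAt_snd_of_differentiableAt {a b : ℝ}
    (hG : DifferentiableAt ℝ (uncurry G) (a, b)) :
    HasDerivAt (G a) (fderiv ℝ (uncurry G) (a, b) (0, 1)) b :=
  hG.hasFDerivAt.comp_hasDerivAt (f := fun s => (a, s)) b
    ((hasDerivAt_const b a).prodMk (hasDerivAt_id b))

theorem fderiv_uncurry_apply {a b : ℝ} (hG : DifferentiableAt ℝ (uncurry G) (a, b)) (u v : ℝ) :
    fderiv ℝ (uncurry G) (a, b) (u, v) = deriv (fun t => G t b) a * u + deriv (G a) b * v := by
  have huv : ((u, v) : ℝ × ℝ) = u • ((1 : ℝ), (0 : ℝ)) + v • ((0 : ℝ), (1 : ℝ)) := by simp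
  rw [(hasDerivAt_fst_of_differentiableAt hG).deriv,
    (hasDerivAt_snd_of_differentiableAt hG).deriv, huv, map_add, map_smul, map_smul, smul_eq_mul,
    smul_eq_mul, mul_comm u, mul_comm v]

theorem contDiff_deriv_fst (hG : ContDiff ℝ 2 (uncurry G)) :
    ContDiff ℝ 1 (fun p : ℝ × ℝ => deriv (fun t => G t p.2) p.1) := by
  have hG' : ∀ p : ℝ × ℝ, deriv (fun t => G t p.2) p.1 = fderiv ℝ (uncurry G) p (1, 0) :=
    fun p => (hasDerivAt_fst_of_differentiableAt (hG.differentiable two_ne_zero p)).deriv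
  simp only [hG']
  exact (hG.fderiv_right (m := 1) le_rfl).clm_apply contDiff_const

theorem bivariate_le_add_deriv_add_mul_sq (hG : ContDiff ℝ 2 (uncurry G)) {m : ℝ}
    (h₁₁ : ∀ a b, |deriv (deriv (fun t => G t b)) a| ≤ m)
    (h₂₁ : ∀ a b, |deriv (fun s => deriv (fun t => G t s) a) b| ≤ m)
    (h₂₂ : ∀ a b, |deriv (deriv (G a)) b| ≤ m) (a b u v : ℝ) :
    G (a + u) (b + v) ≤ G a b + deriv (fun t => G t b) a * u + deriv (G a) b * v
      + 3 * m / 2 * (u ^ 2 + v ^ 2) := by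
  have hm : 0 ≤ m := (abs_nonneg _).trans (h₁₁ a b)
  have hfst : ∀ s, ContDiff ℝ 2 (fun t => G t s) := fun s =>
    hG.comp (contDiff_id.prodMk contDiff_const)
  have hsnd : ContDiff ℝ 2 (G a) := hG.comp (contDiff_const.prodMk contDiff_id)
  have step₁ := le_add_deriv_mul_add_mul_sq ((hfst (b + v)).differentiable two_ne_zero)
    (hfst (b + v)).differentiable_deriv_two (fun t => h₁₁ t (b + v)) a (a + u)
  have step₂ := le_add_deriv_mul_add_mul_sq (hsnd.differentiable two_ne_zero)
    hsnd.differentiable_deriv_two (h₂₂ a) b (b + v)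
  have hcross : |deriv (fun t => G t (b + v)) a - deriv (fun t => G t b) a| ≤ m * |v| := by
    have hd : Differentiable ℝ (fun s => deriv (fun t => G t s) a) :=
      ((contDiff_deriv_fst hG).differentiable one_ne_zero).comp
        ((differentiable_const a).prodMk differentiable_id)
    simpa [Real.norm_eq_abs] using Convex.norm_image_sub_le_of_norm_deriv_le
      (fun s _ => hd s) (fun s _ => by simpa using h₂₁ a s) convex_univ (mem_univ b)
      (mem_univ (b + v))
  have hprod : (deriv (fun t => G t (b + v)) a - deriv (fun t => G t b) a) * u ≤ m * |v| * |u| :=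
    (le_abs_self _).trans (by rw [abs_mul]; gcongr)
  simp only [add_sub_cancel_left] at step₁ step₂
  nlinarith [sq_nonneg (|u| - |v|), sq_abs u, sq_abs v]

theorem ConvexOn.fderiv_apply_sub_le {E : Type*} [NormedAddCommGroup E] [NormedSpace ℝ E]
    {F : E → ℝ} (hF : ConvexOn ℝ univ F) (hd : Differentiable ℝ F) (P Q : E) :
    fderiv ℝ F Q (P - Q) ≤ fderiv ℝ F P (P - Q) := by
  have hψ : ∀ t : ℝ, HasDerivAt (F ∘ AffineMap.lineMap Q P)
      (fderiv ℝ F (AffineMap.lineMap Q P t) (P - Q)) t := fun t =>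
    (hd _).hasFDerivAt.comp_hasDerivAt t (AffineMap.hasDerivAt_lineMap)
  have hmono := (hF.comp_affineMap (AffineMap.lineMap Q P)).monotoneOn_deriv
    (fun t _ => (hψ t).differentiableAt) (mem_univ 0) (mem_univ 1) zero_le_one
  rw [(hψ 0).deriv, (hψ 1).deriv] at hmono
  simpa using hmono

theorem deriv_snd_eq_deriv_fst_of_symm {ι : Type*} {g : ι → ι → ℝ → ℝ → ℝ}
    (hsym : ∀ i j a b, i ≠ j → g i j a b = g j i b a) {i j : ι} (hij : i ≠ j) (a b : ℝ) :
    deriv (g i j a) b = deriv (fun t => g j i t a) b := by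
  congr 1
  funext t
  exact hsym i j a t hij

theorem ConvexOn.partialDerivs_monotone (hG : ConvexOn ℝ univ (uncurry G))
    (hd : Differentiable ℝ (uncurry G)) (a b c d : ℝ) :
    0 ≤ (deriv (fun t => G t b) a - deriv (fun t => G t d) c) * (a - c)
      + (deriv (G a) b - deriv (G c) d) * (b - d) := by
  have := hG.fderiv_apply_sub_le hd (a, b) (c, d)
  rw [Prod.mk_sub_mk, fderiv_uncurry_apply (hd _), fderiv_uncurry_apply (hd _)] at this
  linarith

end PartialDeriv

theorem Finset.sum_min_zero_eq_sum_filter {ι : Type*} (s : Finset ι) (a : ι → ℝ) :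
    ∑ j ∈ s, min (a j) 0 = ∑ j ∈ s.filter (fun j => a j ≤ 0), a j := by
  rw [sum_filter]
  exact sum_congr rfl fun j _ => min_def _ _

theorem Finset.sum_min_zero_le_sum_of_subset {ι : Type*} {s t : Finset ι} (hst : s ⊆ t)
    (a : ι → ℝ) : ∑ j ∈ t, min (a j) 0 ≤ ∑ j ∈ s, a j :=
  (sum_le_sum_of_subset_of_nonpos' hst fun _ _ _ => min_le_right _ _).trans
    (sum_le_sum fun _ _ => min_le_left _ _)

theorem Filter.frequently_le_and_lt_add_of_frequently {u : ℕ → ℝ} {a c : ℝ}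
    (hlow : ∃ᶠ k in atTop, u k < a) (hhigh : ∃ᶠ k in atTop, a ≤ u k)
    (hstep : ∀ᶠ k in atTop, u (k + 1) ≤ u k + c) :
    ∃ᶠ k in atTop, a ≤ u k ∧ u k < a + c := by
  rw [frequently_atTop]
  intro N
  obtain ⟨N₀, hN₀⟩ := eventually_atTop.1 hstep
  obtain ⟨k₁, hk₁, hlow₁⟩ := frequently_atTop.1 hlow (max N N₀)
  obtain ⟨k₂, hk₂, hhigh₂⟩ := frequently_atTop.1 hhigh k₁
  obtain ⟨t, hbelow, habove⟩ := Nat.exists_not_and_succ_of_not_zero_of_exists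
    (p := fun t => a ≤ u (k₁ + t)) (by simpa using hlow₁) ⟨k₂ - k₁, by simpa [hk₂]⟩
  refine ⟨k₁ + t + 1, by omega, habove, ?_⟩
  have := hN₀ (k₁ + t) (by omega)
  simp only [not_le] at hbelow
  linarith

/-- Ostrowski's argument: if `x` does not converge to a cluster point `p`, it crosses a thin
annulus around `p` infinitely often, producing a second cluster point arbitrarily close to `p`. -/
theorem tendsto_of_finite_mapClusterPt {X : Type*} [MetricSpace X] [ProperSpace X] {x : ℕ → X}
    (hx : IsBounded (range x)) (hstep : Tendsto (fun k => dist (x (k + 1)) (x k)) atTop (𝓝 0))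
    {S : Set X} (hS : S.Finite) (hcl : ∀ z, MapClusterPt z atTop x → z ∈ S) :
    ∃ p, Tendsto x atTop (𝓝 p) := by
  obtain ⟨p, -, hp⟩ := hx.isCompact_closure.exists_mapClusterPt (f := atTop)
    (tendsto_principal.2 (.of_forall fun k => subset_closure (mem_range_self k)))
  obtain ⟨ε, hε, hsep⟩ : ∃ ε > 0, ∀ s ∈ S, dist s p < ε → s = p := by
    obtain ⟨ε, hε, hball⟩ := Metric.mem_nhds_iff.1
      ((hS.sdiff (t := {p})).isClosed.compl_mem_nhds fun h => h.2 rfl)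
    exact ⟨ε, hε, fun s hs hsp => by_contra fun hne => hball hsp ⟨hs, hne⟩⟩
  refine ⟨p, Metric.tendsto_atTop.2 fun δ hδ => ?_⟩
  by_contra! hfar
  set r := min δ (ε / 2)
  have hr : 0 < r := by positivity
  have hann : ∃ᶠ k in atTop, r / 2 ≤ dist (x k) p ∧ dist (x k) p < r / 2 + r / 2 := by
    refine frequently_le_and_lt_add_of_frequently
      (hp.frequently (Metric.ball_mem_nhds p (by positivity))) (frequently_atTop.2 fun N => ?_) ?_
    · obtain ⟨k, hk, hδk⟩ := hfar N
      exact ⟨k, hk, by linarith [min_le_left δ (ε / 2)]⟩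
    · filter_upwards [Metric.tendsto_nhds.1 hstep (r / 2) (by positivity)] with k hk
      rw [Real.dist_eq, sub_zero, abs_of_nonneg dist_nonneg] at hk
      linarith [dist_triangle (x (k + 1)) (x k) p, dist_comm (x (k + 1)) (x k)]
  have hcompact : IsCompact (Metric.closedBall p r ∩ {y | r / 2 ≤ dist y p}) :=
    (isCompact_closedBall p r).inter_right
      (isClosed_le continuous_const (continuous_id.dist continuous_const))
  obtain ⟨z, ⟨hz₁, hz₂⟩, hz⟩ := hcompact.exists_mapClusterPt_of_frequently
    (hann.mono fun k hk => ⟨Metric.mem_closedBall.2 (by linarith [hk.2]), hk.1⟩)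
  have hzp := hsep z (hcl z hz)
    (by linarith [Metric.mem_closedBall.1 hz₁, min_le_right δ (ε / 2)])
  have : r / 2 ≤ dist z p := hz₂
  rw [hzp, dist_self] at this
  linarith

theorem tendsto_zero_of_add_mul_sq_le {v d : ℕ → ℝ} {m : ℝ} (hm : 0 < m)
    (hv : BddBelow (range v)) (hdec : ∀ k, v (k + 1) + m * d k ^ 2 ≤ v k) :
    Tendsto d atTop (𝓝 0) := by
  have hanti : Antitone v :=
    antitone_nat_of_succ_le fun k => by nlinarith [hdec k, sq_nonneg (d k)]
  have hlim := tendsto_atTop_ciInf hanti hv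
  have hgap : Tendsto (fun k => (v k - v (k + 1)) / m) atTop (𝓝 0) := by
    simpa using (hlim.sub (hlim.comp (tendsto_add_atTop_nat 1))).div_const m
  have hsq : Tendsto (fun k => d k ^ 2) atTop (𝓝 0) :=
    squeeze_zero (fun k => sq_nonneg (d k))
      (fun k => (le_div_iff₀' hm).2 (by linarith [hdec k])) hgap
  rw [tendsto_zero_iff_abs_tendsto_zero]
  simpa [Function.comp_def, Real.sqrt_sq_eq_abs] using hsq.sqrt

namespace Network

variable {n : ℕ}

def IsSymmNbhd (c : Fin n → Finset (Fin n)) : Prop :=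
  (∀ i j, j ∈ c i ↔ i ∈ c j) ∧ ∀ i, i ∉ c i

theorem IsSymmNbhd.sum_sum_swap {c : Fin n → Finset (Fin n)} (hc : IsSymmNbhd c)
    (F : Fin n → Fin n → ℝ) : ∑ i, ∑ j ∈ c i, F j i = ∑ i, ∑ j ∈ c i, F i j :=
  (sum_comm' fun i j => by simp [hc.1 i j]).symm

theorem IsSymmNbhd.ne {c : Fin n → Finset (Fin n)} (hc : IsSymmNbhd c) {i j : Fin n}
    (hj : j ∈ c i) : i ≠ j :=
  fun h => hc.2 i (h ▸ hj)

variable (f : Fin n → ℝ → ℝ) (g : Fin n → Fin n → ℝ → ℝ → ℝ)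

noncomputable def nbhd (y : EuclideanSpace ℝ (Fin n)) (i : Fin n) : Finset (Fin n) :=
  univ.filter fun j => j ≠ i ∧ g i j (y i) (y j) ≤ 0

/-- When `g` is symmetric and `c` is a symmetric neighbourhood system, this is the partial
derivative in `yᵢ` of `∑ᵢ fᵢ yᵢ + ½ ∑ᵢ ∑_{j ∈ c i} gᵢⱼ yᵢ yⱼ`. -/
noncomputable def netGrad (c : Fin n → Finset (Fin n)) (y : EuclideanSpace ℝ (Fin n))
    (i : Fin n) : ℝ :=
  deriv (f i) (y i) + ∑ j ∈ c i, deriv (fun t => g i j t (y j)) (y i)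

noncomputable def bcdMap (m : ℝ) (y : EuclideanSpace ℝ (Fin n)) : EuclideanSpace ℝ (Fin n) :=
  WithLp.toLp 2 fun i =>
    y i - netGrad f g (nbhd g y) y i / (2 * m * ((nbhd g y i).card + 1))

/-- Writing the pair terms as `min · 0` makes this the potential of the current neighbourhood
system (`lyapunov_eq`) and a lower bound for that of any other one (`lyapunov_le`), which is how
the descent argument copes with neighbourhoods that change along the iteration. -/
noncomputable def lyapunov (y : EuclideanSpace ℝ (Fin n)) : ℝ :=
  ∑ i, f i (y i) + 1 / 2 * ∑ i, ∑ j ∈ univ.filter (· ≠ i), min (g i j (y i) (y j)) 0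

variable {f g}

theorem isSymmNbhd_nbhd (hsym : ∀ i j a b, i ≠ j → g i j a b = g j i b a)
    (y : EuclideanSpace ℝ (Fin n)) : IsSymmNbhd (nbhd g y) := by
  refine ⟨fun i j => ?_, fun i => by simp [nbhd]⟩
  simp only [nbhd, mem_filter, Finset.mem_univ, true_and]
  constructor <;> rintro ⟨hne, hle⟩
  · exact ⟨hne.symm, by rwa [← hsym i j _ _ hne.symm]⟩
  · exact ⟨hne.symm, by rwa [hsym i j _ _ hne]⟩

theorem lyapunov_eq (y : EuclideanSpace ℝ (Fin n)) :
    lyapunov f g y = ∑ i, f i (y i) + 1 / 2 * ∑ i, ∑ j ∈ nbhd g y i, g i j (y i) (y j) := by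
  simp only [lyapunov, sum_min_zero_eq_sum_filter, filter_filter, nbhd]

theorem lyapunov_le {c : Fin n → Finset (Fin n)} (hc : IsSymmNbhd c)
    (y : EuclideanSpace ℝ (Fin n)) :
    lyapunov f g y ≤ ∑ i, f i (y i) + 1 / 2 * ∑ i, ∑ j ∈ c i, g i j (y i) (y j) := by
  unfold lyapunov
  gcongr with i
  exact sum_min_zero_le_sum_of_subset (fun j hj => by simpa using (hc.ne hj).symm) _

section Descent

variable {m : ℝ}

theorem sum_sum_le_of_isSymmNbhd {c : Fin n → Finset (Fin n)} (hc : IsSymmNbhd c)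
    (hgC : ∀ i j, i ≠ j → ContDiff ℝ 2 (uncurry (g i j)))
    (hsym : ∀ i j a b, i ≠ j → g i j a b = g j i b a)
    (hg₁₁ : ∀ i j a b, i ≠ j → |deriv (deriv (fun t => g i j t b)) a| ≤ m)
    (hg₂₁ : ∀ i j a b, i ≠ j → |deriv (fun s => deriv (fun t => g i j t s) a) b| ≤ m)
    (hg₂₂ : ∀ i j a b, i ≠ j → |deriv (deriv (g i j a)) b| ≤ m)
    (y Δ : EuclideanSpace ℝ (Fin n)) :
    1 / 2 * ∑ i, ∑ j ∈ c i, g i j ((y + Δ) i) ((y + Δ) j) ≤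
      1 / 2 * ∑ i, ∑ j ∈ c i, g i j (y i) (y j)
      + ∑ i, (∑ j ∈ c i, deriv (fun t => g i j t (y j)) (y i)) * Δ i
      + 3 * m / 2 * ∑ i, (c i).card * Δ i ^ 2 := by
  set A : Fin n → Fin n → ℝ := fun i j => deriv (fun t => g i j t (y j)) (y i) * Δ i
  -- by symmetry of `g` the cross term of the pair `(i, j)` is `A j i`; swapping the double sum
  -- turns it into a second copy of `A i j`, which cancels the factor `½`.
  have hpair : ∀ i, ∀ j ∈ c i, g i j ((y + Δ) i) ((y + Δ) j) ≤
      g i j (y i) (y j) + A i j + A j i + 3 * m / 2 * (Δ i ^ 2 + Δ j ^ 2) := by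
    intro i j hj
    have hij := hc.ne hj
    rw [PiLp.add_apply, PiLp.add_apply]
    simpa only [A, deriv_snd_eq_deriv_fst_of_symm hsym hij] using
      bivariate_le_add_deriv_add_mul_sq (hgC i j hij) (fun a b => hg₁₁ i j a b hij)
        (fun a b => hg₂₁ i j a b hij) (fun a b => hg₂₂ i j a b hij) (y i) (y j) (Δ i) (Δ j)
  calc _ ≤ 1 / 2 * ∑ i, ∑ j ∈ c i,
        (g i j (y i) (y j) + A i j + A j i + 3 * m / 2 * (Δ i ^ 2 + Δ j ^ 2)) := by
        gcongr with i _ j hj; exact hpair i j hj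
    _ = _ := by
      simp only [sum_add_distrib, ← mul_sum, hc.sum_sum_swap A,
        hc.sum_sum_swap fun i _ => Δ i ^ 2, A, ← sum_mul, sum_const, nsmul_eq_mul]
      ring

theorem lyapunov_add_le (hfC : ∀ i, ContDiff ℝ 2 (f i))
    (hf₂ : ∀ i t, |deriv (deriv (f i)) t| ≤ m)
    (hgC : ∀ i j, i ≠ j → ContDiff ℝ 2 (uncurry (g i j)))
    (hsym : ∀ i j a b, i ≠ j → g i j a b = g j i b a)
    (hg₁₁ : ∀ i j a b, i ≠ j → |deriv (deriv (fun t => g i j t b)) a| ≤ m)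
    (hg₂₁ : ∀ i j a b, i ≠ j → |deriv (fun s => deriv (fun t => g i j t s) a) b| ≤ m)
    (hg₂₂ : ∀ i j a b, i ≠ j → |deriv (deriv (g i j a)) b| ≤ m)
    (y Δ : EuclideanSpace ℝ (Fin n)) :
    lyapunov f g (y + Δ) ≤ lyapunov f g y + ∑ i, netGrad f g (nbhd g y) y i * Δ i
      + m * ∑ i, (1 + 3 / 2 * (nbhd g y i).card) * Δ i ^ 2 := by
  have hf : ∀ i, f i ((y + Δ) i) ≤ f i (y i) + deriv (f i) (y i) * Δ i + m * Δ i ^ 2 :=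
    fun i => by
      simpa using le_add_deriv_mul_add_mul_sq ((hfC i).differentiable two_ne_zero)
        (hfC i).differentiable_deriv_two (hf₂ i) (y i) (y i + Δ i)
  calc lyapunov f g (y + Δ)
      ≤ ∑ i, f i ((y + Δ) i)
          + 1 / 2 * ∑ i, ∑ j ∈ nbhd g y i, g i j ((y + Δ) i) ((y + Δ) j) :=
        lyapunov_le (isSymmNbhd_nbhd hsym y) _
    _ ≤ ∑ i, (f i (y i) + deriv (f i) (y i) * Δ i + m * Δ i ^ 2)
        + (1 / 2 * ∑ i, ∑ j ∈ nbhd g y i, g i j (y i) (y j)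
          + ∑ i, (∑ j ∈ nbhd g y i, deriv (fun t => g i j t (y j)) (y i)) * Δ i
          + 3 * m / 2 * ∑ i, (nbhd g y i).card * Δ i ^ 2) :=
        add_le_add (sum_le_sum fun i _ => hf i) (sum_sum_le_of_isSymmNbhd
          (isSymmNbhd_nbhd hsym y) hgC hsym hg₁₁ hg₂₁ hg₂₂ y Δ)
    _ = _ := by
      simp only [lyapunov_eq, netGrad, sum_add_distrib, add_mul, mul_add, mul_sum]
      ring_nf

theorem netGrad_eq_mul_bcdMap_sub (hm : m ≠ 0) (y : EuclideanSpace ℝ (Fin n)) (i : Fin n) :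
    netGrad f g (nbhd g y) y i =
      -(2 * m * ((nbhd g y i).card + 1)) * (bcdMap f g m y i - y i) := by
  simp only [bcdMap, PiLp.toLp_apply]
  field_simp
  ring

theorem lyapunov_bcdMap_add_le (hm : 0 < m)
    (hfC : ∀ i, ContDiff ℝ 2 (f i)) (hf₂ : ∀ i t, |deriv (deriv (f i)) t| ≤ m)
    (hgC : ∀ i j, i ≠ j → ContDiff ℝ 2 (uncurry (g i j)))
    (hsym : ∀ i j a b, i ≠ j → g i j a b = g j i b a)
    (hg₁₁ : ∀ i j a b, i ≠ j → |deriv (deriv (fun t => g i j t b)) a| ≤ m)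
    (hg₂₁ : ∀ i j a b, i ≠ j → |deriv (fun s => deriv (fun t => g i j t s) a) b| ≤ m)
    (hg₂₂ : ∀ i j a b, i ≠ j → |deriv (deriv (g i j a)) b| ≤ m)
    (y : EuclideanSpace ℝ (Fin n)) :
    lyapunov f g (bcdMap f g m y) + m * dist (bcdMap f g m y) y ^ 2 ≤ lyapunov f g y := by
  -- `netGrad * Δᵢ = -2m(|Nᵢ| + 1) Δᵢ²` outweighs the quadratic term `m (1 + 3/2 |Nᵢ|) Δᵢ²`.
  have h := lyapunov_add_le hfC hf₂ hgC hsym hg₁₁ hg₂₁ hg₂₂ y (bcdMap f g m y - y)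
  rw [add_sub_cancel] at h
  have hterm : ∀ i, netGrad f g (nbhd g y) y i * (bcdMap f g m y - y) i
      + m * ((1 + 3 / 2 * (nbhd g y i).card) * (bcdMap f g m y - y) i ^ 2)
      ≤ -(m * dist (bcdMap f g m y i) (y i) ^ 2) := fun i => by
    rw [netGrad_eq_mul_bcdMap_sub hm.ne', PiLp.sub_apply, Real.dist_eq, sq_abs]
    nlinarith [mul_nonneg (mul_nonneg hm.le (Nat.cast_nonneg (nbhd g y i).card))
      (sq_nonneg (bcdMap f g m y i - y i))]
  have := sum_le_sum fun i (_ : i ∈ Finset.univ) => hterm i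
  rw [sum_add_distrib, ← mul_sum, sum_neg_distrib, ← mul_sum,
    ← EuclideanSpace.dist_sq_eq] at this
  linarith

theorem abs_netGrad_nbhd_le (hm : 0 < m) (y : EuclideanSpace ℝ (Fin n)) (i : Fin n) :
    |netGrad f g (nbhd g y) y i| ≤ 2 * m * (n + 1) * dist (bcdMap f g m y) y := by
  rw [netGrad_eq_mul_bcdMap_sub hm.ne', abs_mul, abs_neg, abs_of_pos (by positivity),
    ← Real.dist_eq]
  have hcard : ((nbhd g y i).card : ℝ) ≤ n := by
    exact_mod_cast (card_le_univ _).trans_eq (Fintype.card_fin n)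
  gcongr
  exact PiLp.dist_apply_le _ _ i

theorem tendsto_netGrad_nbhd (hm : 0 < m) {x : ℕ → EuclideanSpace ℝ (Fin n)}
    (hstep : Tendsto (fun k => dist (bcdMap f g m (x k)) (x k)) atTop (𝓝 0)) :
    Tendsto (fun k => netGrad f g (nbhd g (x k)) (x k)) atTop (𝓝 0) :=
  tendsto_pi_nhds.2 fun i => squeeze_zero_norm (fun k => abs_netGrad_nbhd_le hm (x k) i)
    (by simpa using hstep.const_mul (2 * m * (n + 1)))

end Descent

section Coercivity

theorem exists_sum_add_le_lyapunov
    (hgB : ∀ i j, i ≠ j → BddBelow (range (uncurry (g i j)))) :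
    ∃ C, ∀ y, ∑ i, f i (y i) + C ≤ lyapunov f g y := by
  refine ⟨1 / 2 * ∑ i, ∑ j ∈ univ.filter (· ≠ i), min (sInf (range (uncurry (g i j)))) 0,
    fun y => ?_⟩
  unfold lyapunov
  gcongr with i _ j hj
  exact csInf_le (hgB i j (mem_filter.1 hj).2.symm) ⟨(y i, y j), rfl⟩

theorem lyapunov_bddBelow (hfMin : ∀ i, ∃ z, ∀ y, f i z ≤ f i y)
    (hgB : ∀ i j, i ≠ j → BddBelow (range (uncurry (g i j)))) :
    BddBelow (range (lyapunov f g)) := by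
  choose z hz using hfMin
  obtain ⟨C, hC⟩ := exists_sum_add_le_lyapunov (f := f) hgB
  exact ⟨∑ i, f i (z i) + C, by
    rintro _ ⟨y, rfl⟩
    exact le_trans (by gcongr with i; exact hz i (y i)) (hC y)⟩

theorem isBounded_lyapunov_sublevel (hfStrict : ∀ i, StrictConvexOn ℝ univ (f i))
    (hfMin : ∀ i, ∃ z, ∀ y, f i z ≤ f i y)
    (hgB : ∀ i j, i ≠ j → BddBelow (range (uncurry (g i j)))) (K : ℝ) :
    IsBounded {y | lyapunov f g y ≤ K} := by
  choose z hz using hfMin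
  obtain ⟨C, hC⟩ := exists_sum_add_le_lyapunov (f := f) hgB
  rw [isBounded_induced, ← forall_isBounded_image_eval_iff]
  intro i
  refine ((hfStrict i).isBounded_sublevel (hz i)
    (K - C - ∑ j, f j (z j) + f i (z i))).subset ?_
  rintro _ ⟨_, ⟨y, hy, rfl⟩, rfl⟩
  have hsingle : f i (y i) - f i (z i) ≤ ∑ j, (f j (y j) - f j (z j)) :=
    single_le_sum (f := fun j => f j (y j) - f j (z j)) (fun j _ => sub_nonneg.2 (hz j (y j)))
      (Finset.mem_univ i)
  rw [sum_sub_distrib] at hsingle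
  have hy : lyapunov f g y ≤ K := hy
  show f i (y i) ≤ _
  linarith [hC y]

end Coercivity

section CriticalPoints

theorem continuous_netGrad (hfC : ∀ i, ContDiff ℝ 2 (f i))
    (hgC : ∀ i j, i ≠ j → ContDiff ℝ 2 (uncurry (g i j)))
    {c : Fin n → Finset (Fin n)} (hc : IsSymmNbhd c) : Continuous (netGrad f g c) := by
  refine continuous_pi fun i => (((hfC i).continuous_deriv one_le_two).comp
    (EuclideanSpace.proj i).continuous).add (continuous_finsetSum _ fun j hj => ?_)
  exact (contDiff_deriv_fst (hgC i j (hc.ne hj))).continuous.comp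
    ((EuclideanSpace.proj i).continuous.prodMk (EuclideanSpace.proj j).continuous)

theorem sum_netGrad_sub_mul_sub_pos (hfd : ∀ i, Differentiable ℝ (f i))
    (hfStrict : ∀ i, StrictConvexOn ℝ univ (f i))
    (hgd : ∀ i j, i ≠ j → Differentiable ℝ (uncurry (g i j)))
    (hgConv : ∀ i j, i ≠ j → ConvexOn ℝ univ (uncurry (g i j)))
    (hsym : ∀ i j a b, i ≠ j → g i j a b = g j i b a)
    {c : Fin n → Finset (Fin n)} (hc : IsSymmNbhd c) {p q : EuclideanSpace ℝ (Fin n)}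
    (hpq : p ≠ q) : 0 < ∑ i, (netGrad f g c p i - netGrad f g c q i) * (p i - q i) := by
  set F : Fin n → Fin n → ℝ := fun i j =>
    (deriv (fun t => g i j t (p j)) (p i) - deriv (fun t => g i j t (q j)) (q i)) * (p i - q i)
  have hsplit : ∑ i, (netGrad f g c p i - netGrad f g c q i) * (p i - q i) =
      ∑ i, (deriv (f i) (p i) - deriv (f i) (q i)) * (p i - q i) + ∑ i, ∑ j ∈ c i, F i j := by
    simp only [netGrad, F, ← sum_mul, ← sum_add_distrib, sum_sub_distrib]
    exact sum_congr rfl fun i _ => by ring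
  have hpairs : 0 ≤ ∑ i, ∑ j ∈ c i, F i j := by
    have hterm : ∀ i, ∀ j ∈ c i, 0 ≤ F i j + F j i := fun i j hj => by
      have hij := hc.ne hj
      simpa only [F, deriv_snd_eq_deriv_fst_of_symm hsym hij] using
        (hgConv i j hij).partialDerivs_monotone (hgd i j hij) (p i) (p j) (q i) (q j)
    have := sum_nonneg fun i (_ : i ∈ Finset.univ) => sum_nonneg (hterm i)
    rw [sum_congr rfl fun i _ => sum_add_distrib, sum_add_distrib, hc.sum_sum_swap F] at this
    linarith
  obtain ⟨i₀, hi₀⟩ : ∃ i, p i ≠ q i := by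
    by_contra! h
    exact hpq (PiLp.ext h)
  have hf : 0 < ∑ i, (deriv (f i) (p i) - deriv (f i) (q i)) * (p i - q i) :=
    sum_pos' (fun i _ => (hfStrict i).deriv_sub_mul_sub_nonneg (hfd i) _ _)
      ⟨i₀, Finset.mem_univ _, (hfStrict i₀).deriv_sub_mul_sub_pos (hfd i₀) hi₀⟩
  linarith

variable (f g) in
def critSet : Set (EuclideanSpace ℝ (Fin n)) :=
  {y | ∃ c, IsSymmNbhd c ∧ netGrad f g c y = 0}

theorem critSet_finite (hfd : ∀ i, Differentiable ℝ (f i))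
    (hfStrict : ∀ i, StrictConvexOn ℝ univ (f i))
    (hgd : ∀ i j, i ≠ j → Differentiable ℝ (uncurry (g i j)))
    (hgConv : ∀ i j, i ≠ j → ConvexOn ℝ univ (uncurry (g i j)))
    (hsym : ∀ i j a b, i ≠ j → g i j a b = g j i b a) : (critSet f g).Finite := by
  have hunion : critSet f g = ⋃ c, {y | IsSymmNbhd c ∧ netGrad f g c y = 0} := by
    ext; simp [critSet]
  rw [hunion]
  refine finite_iUnion fun c => Subsingleton.finite ?_
  rintro p ⟨hc, hp⟩ q ⟨-, hq⟩
  by_contra hpq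
  have := sum_netGrad_sub_mul_sub_pos hfd hfStrict hgd hgConv hsym hc hpq
  simp [hp, hq] at this

theorem mem_critSet_of_mapClusterPt (hfC : ∀ i, ContDiff ℝ 2 (f i))
    (hgC : ∀ i j, i ≠ j → ContDiff ℝ 2 (uncurry (g i j)))
    (hsym : ∀ i j a b, i ≠ j → g i j a b = g j i b a) {x : ℕ → EuclideanSpace ℝ (Fin n)}
    (hgrad : Tendsto (fun k => netGrad f g (nbhd g (x k)) (x k)) atTop (𝓝 0))
    {z : EuclideanSpace ℝ (Fin n)} (hz : MapClusterPt z atTop x) : z ∈ critSet f g := by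
  -- the union of the graphs of the finitely many `netGrad f g c` is closed
  set K : Set (EuclideanSpace ℝ (Fin n) × (Fin n → ℝ)) :=
    ⋃ c ∈ {c | IsSymmNbhd c}, {p | p.2 = netGrad f g c p.1}
  have hK : IsClosed K := (Set.toFinite _).isClosed_biUnion fun c hc =>
    isClosed_eq continuous_snd ((continuous_netGrad hfC hgC hc).comp continuous_fst)
  obtain ⟨ψ, hψ, hlim⟩ := hz.tendsto_subseq
  obtain ⟨c, hc, hzc⟩ := mem_iUnion₂.1 <| hK.mem_of_tendsto
    (hlim.prodMk_nhds (hgrad.comp hψ.tendsto_atTop))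
    (.of_forall fun k => mem_biUnion (isSymmNbhd_nbhd hsym (x (ψ k))) rfl)
  exact ⟨c, hc, hzc.symm⟩

end CriticalPoints

end Network

open Network

theorem bcd_state_dependent_dynamics_converges_general
    (n : ℕ) (m : ℝ) (hm : 0 < m)
    (f : Fin n → ℝ → ℝ) (g : Fin n → Fin n → ℝ → ℝ → ℝ)
    (hfC : ∀ i, ContDiff ℝ 2 (f i))
    (hfStrict : ∀ i, StrictConvexOn ℝ Set.univ (f i))
    (hfMin : ∀ i, ∃ z, ∀ y, f i z ≤ f i y)
    (hgC : ∀ i j, i ≠ j → ContDiff ℝ 2 (fun p : ℝ × ℝ => g i j p.1 p.2))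
    (hgConv : ∀ i j, i ≠ j → ConvexOn ℝ Set.univ (fun p : ℝ × ℝ => g i j p.1 p.2))
    (hgB : ∀ i j, i ≠ j → BddBelow (Set.range (fun p : ℝ × ℝ => g i j p.1 p.2)))
    (hsym : ∀ i j a b, i ≠ j → g i j a b = g j i b a)
    (hf2 : ∀ i t, |deriv (deriv (f i)) t| ≤ m)
    (hg11 : ∀ i j a b, i ≠ j → |deriv (fun t => deriv (fun s => g i j s b) t) a| ≤ m)
    (hg21 : ∀ i j a b, i ≠ j → |deriv (fun s => deriv (fun t => g i j t s) a) b| ≤ m)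
    (hg22 : ∀ i j a b, i ≠ j → |deriv (fun s => deriv (fun t => g i j a t) s) b| ≤ m)
    (x : ℕ → EuclideanSpace ℝ (Fin n))
    (hdyn : ∀ k i, x (k + 1) i = x k i -
      (deriv (f i) (x k i) +
        ∑ j ∈ Finset.univ.filter (fun j => j ≠ i ∧ g i j (x k i) (x k j) ≤ 0),
          deriv (fun t => g i j t (x k j)) (x k i)) /
      (2 * m * (((Finset.univ.filter
          (fun j => j ≠ i ∧ g i j (x k i) (x k j) ≤ 0)).card : ℝ) + 1))) :
    ∃ xs : EuclideanSpace ℝ (Fin n), Tendsto x atTop (nhds xs) := by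
  have hx : ∀ k, x (k + 1) = bcdMap f g m (x k) := fun k => by
    ext i
    rw [hdyn]
    rfl
  have hdec : ∀ k, lyapunov f g (x (k + 1)) + m * dist (x (k + 1)) (x k) ^ 2 ≤ lyapunov f g (x k) :=
    fun k => hx k ▸ lyapunov_bcdMap_add_le hm hfC hf2 hgC hsym hg11 hg21 hg22 (x k)
  have hstep : Tendsto (fun k => dist (x (k + 1)) (x k)) atTop (𝓝 0) :=
    tendsto_zero_of_add_mul_sq_le hm
      ((lyapunov_bddBelow hfMin hgB).mono (range_comp_subset_range x _)) hdec
  have hanti : Antitone fun k => lyapunov f g (x k) :=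
    antitone_nat_of_succ_le fun k => (le_add_of_nonneg_right (by positivity)).trans (hdec k)
  have hbdd : IsBounded (range x) :=
    (isBounded_lyapunov_sublevel hfStrict hfMin hgB (lyapunov f g (x 0))).subset
      (range_subset_iff.2 fun k => hanti (Nat.zero_le k))
  have hgrad := tendsto_netGrad_nbhd (f := f) (g := g) hm (x := x) (by simpa only [hx] using hstep)
  exact tendsto_of_finite_mapClusterPt hbdd hstep
    (critSet_finite (fun i => (hfC i).differentiable two_ne_zero) hfStrict
      (fun i j hij => (hgC i j hij).differentiable two_ne_zero) hgConv hsym)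
    fun z hz => mem_critSet_of_mapClusterPt hfC hgC hsym hgrad hz

/-- with strictly convex `fᵢ` attaining their minima and convex,
bounded-below, symmetric measurements `g_ij`, the inexact-BCD state-dependent network
dynamics converge to a point. -/
theorem bcd_state_dependent_dynamics_converges
    (n : ℕ) (m : ℝ) (hm : 0 < m)
    (f : Fin n → ℝ → ℝ) (g : Fin n → Fin n → ℝ → ℝ → ℝ)
    (hfC : ∀ i, ContDiff ℝ 2 (f i))
    (hfStrict : ∀ i, StrictConvexOn ℝ Set.univ (f i))
    (hfMin : ∀ i, ∃ z, ∀ y, f i z ≤ f i y)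
    (hgC : ∀ i j, i ≠ j → ContDiff ℝ 2 (fun p : ℝ × ℝ => g i j p.1 p.2))
    (hgConv : ∀ i j, i ≠ j → ConvexOn ℝ Set.univ (fun p : ℝ × ℝ => g i j p.1 p.2))
    (hgB : ∀ i j, i ≠ j → BddBelow (Set.range (fun p : ℝ × ℝ => g i j p.1 p.2)))
    (hsym : ∀ i j a b, i ≠ j → g i j a b = g j i b a)
    (hf2 : ∀ i t, |deriv (deriv (f i)) t| ≤ m)
    (hg11 : ∀ i j a b, i ≠ j → |deriv (fun t => deriv (fun s => g i j s b) t) a| ≤ m)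
    (hg12 : ∀ i j a b, i ≠ j → |deriv (fun t => deriv (fun s => g i j t s) b) a| ≤ m)
    (hg21 : ∀ i j a b, i ≠ j → |deriv (fun s => deriv (fun t => g i j t s) a) b| ≤ m)
    (hg22 : ∀ i j a b, i ≠ j → |deriv (fun s => deriv (fun t => g i j a t) s) b| ≤ m)
    (x : ℕ → EuclideanSpace ℝ (Fin n))
    (hdyn : ∀ k i, x (k + 1) i = x k i -
      (deriv (f i) (x k i) +
        ∑ j ∈ Finset.univ.filter (fun j => j ≠ i ∧ g i j (x k i) (x k j) ≤ 0),
          deriv (fun t => g i j t (x k j)) (x k i)) /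
      (2 * m * (((Finset.univ.filter
          (fun j => j ≠ i ∧ g i j (x k i) (x k j) ≤ 0)).card : ℝ) + 1))) :
    ∃ xs : EuclideanSpace ℝ (Fin n), Tendsto x atTop (nhds xs) :=
  bcd_state_dependent_dynamics_converges_general n m hm f g hfC hfStrict hfMin hgC hgConv hgB hsym
    hf2 hg11 hg21 hg22 x hdyn
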